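/- Let A ∈ [0,1] and let M = (1/(1+A)²)·[[2A, A+1],[−A²+2A+1, −A²−A]] (the inverse of dT when A ∈ (0,1)). If v ∈ ℝ² satisfies ‖v‖ < √2 in the Euclidean norm, then ‖M v‖ < 2. -/

import Mathlib

/-!
The row vectors of the numerator matrix `(1+A)² M` have squared lengths summing to
`2A⁴ - 2A³ + 8A² + 6A + 2`, which falls short of `2(1+A)⁴` by `10A³ + 4A² + 2A ≥ 0`.
So by Cauchy–Schwarz row by row, `‖M v‖² ≤ 2‖v‖² < 4`.
-/

/-- The inverse of the linear part of the canonical affine transformation: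
`M = (1/(1+A)²)·[[2A, A+1],[−A²+2A+1, −A²−A]]`. -/
noncomputable def Mi (A : ℝ) (v : ℝ × ℝ) : ℝ × ℝ :=
  ((2 * A * v.1 + (A + 1) * v.2) / (1 + A) ^ 2,
   ((-A ^ 2 + 2 * A + 1) * v.1 + (-A ^ 2 - A) * v.2) / (1 + A) ^ 2)

theorem sq_add_sq_apply_le_frobenius (a b c d x y : ℝ) :
    (a * x + b * y) ^ 2 + (c * x + d * y) ^ 2 ≤ (a ^ 2 + b ^ 2 + c ^ 2 + d ^ 2) * (x ^ 2 + y ^ 2) := by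
  have lagrange : (a ^ 2 + b ^ 2 + c ^ 2 + d ^ 2) * (x ^ 2 + y ^ 2) =
      (a * x + b * y) ^ 2 + (c * x + d * y) ^ 2 + (a * y - b * x) ^ 2 + (c * y - d * x) ^ 2 := by
    ring
  linarith [sq_nonneg (a * y - b * x), sq_nonneg (c * y - d * x)]

theorem Mi_frobenius_sq_le {A : ℝ} (hA : 0 ≤ A) :
    (2 * A) ^ 2 + (A + 1) ^ 2 + (-A ^ 2 + 2 * A + 1) ^ 2 + (-A ^ 2 - A) ^ 2 ≤ 2 * ((1 + A) ^ 2) ^ 2 := by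
  have gap : 2 * ((1 + A) ^ 2) ^ 2 -
      ((2 * A) ^ 2 + (A + 1) ^ 2 + (-A ^ 2 + 2 * A + 1) ^ 2 + (-A ^ 2 - A) ^ 2) =
      10 * A ^ 3 + 4 * A ^ 2 + 2 * A := by
    ring
  have : 0 ≤ 10 * A ^ 3 + 4 * A ^ 2 + 2 * A := by positivity
  linarith

theorem Mi_sq_norm_le {A : ℝ} (hA : 0 ≤ A) (v : ℝ × ℝ) :
    (Mi A v).1 ^ 2 + (Mi A v).2 ^ 2 ≤ 2 * (v.1 ^ 2 + v.2 ^ 2) := by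
  have hd : (0 : ℝ) < ((1 + A) ^ 2) ^ 2 := by positivity
  simp only [Mi, div_pow, ← add_div]
  rw [div_le_iff₀ hd]
  calc (2 * A * v.1 + (A + 1) * v.2) ^ 2 + ((-A ^ 2 + 2 * A + 1) * v.1 + (-A ^ 2 - A) * v.2) ^ 2
      ≤ ((2 * A) ^ 2 + (A + 1) ^ 2 + (-A ^ 2 + 2 * A + 1) ^ 2 + (-A ^ 2 - A) ^ 2) *
          (v.1 ^ 2 + v.2 ^ 2) := sq_add_sq_apply_le_frobenius _ _ _ _ _ _
    _ ≤ 2 * ((1 + A) ^ 2) ^ 2 * (v.1 ^ 2 + v.2 ^ 2) :=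
        mul_le_mul_of_nonneg_right (Mi_frobenius_sq_le hA) (by positivity)
    _ = 2 * (v.1 ^ 2 + v.2 ^ 2) * ((1 + A) ^ 2) ^ 2 := by ring

/-- for `A ∈ [0,1]`, if `‖v‖ < √2` (Euclidean norm) then `‖M v‖ < 2`. -/
theorem stmt7 (A : ℝ) (hA : A ∈ Set.Icc (0 : ℝ) 1) (v : ℝ × ℝ)
    (hv : Real.sqrt (v.1 ^ 2 + v.2 ^ 2) < Real.sqrt 2) :
    Real.sqrt ((Mi A v).1 ^ 2 + (Mi A v).2 ^ 2) < 2 := by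
  have hv2 : v.1 ^ 2 + v.2 ^ 2 < 2 := (Real.sqrt_lt_sqrt_iff (by positivity)).mp hv
  calc Real.sqrt ((Mi A v).1 ^ 2 + (Mi A v).2 ^ 2)
      ≤ Real.sqrt (2 * (v.1 ^ 2 + v.2 ^ 2)) := Real.sqrt_le_sqrt (Mi_sq_norm_le hA.1 v)
    _ < Real.sqrt (2 ^ 2) := Real.sqrt_lt_sqrt (by positivity) (by linarith)
    _ = 2 := Real.sqrt_sq zero_le_two
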